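/- arXiv:1205.2992 — 3 statements merged into one kernel-verified Lean document; each statement's English description precedes it below -/
import Mathlib

section
/- For every q = (x_0, …, x_k) ∈ C^k(m), let D_k(q) = span{v_r(q) : r = 1, …, m+1} where v_r(q) = (x_k^r − x_{k−1}^r)·Y_k(q) + e_r^{(k)}. Let L_k(q) = { v ∈ (ℝ^{m+1})^{k+1} : v is supported in the k-th component and its k-th component is orthogonal to x_k − x_{k−1} }, and let X_k(q) = Y_k(q) + V_k(q), where V_k(q) is the tuple whose k-th component is x_k − x_{k−1} and whose other components are 0. Then D_k(q) is the direct sum of L_k(q) and the line spanned by X_k(q): D_k(q) = L_k(q) ⊕ ℝ·X_k(q). -/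
/-!
Write `u = x_k - x_{k-1}` (a unit vector) and `ι a` for the tuple carrying `a ∈ ℝ^{m+1}` in its
`k`-th slot. Then `Σ c_r v_r = ⟪c, u⟫ Y_k + ι c`, and splitting `c = (c - ⟪c, u⟫ u) + ⟪c, u⟫ u`
rewrites this as `ι (c - ⟪c, u⟫ u) + ⟪c, u⟫ X_k` with `X_k = Y_k + ι u`. The sum is direct because
`Y_k` vanishes in the `k`-th slot: reading off that slot of `ι a + c X_k = 0` gives `a + c u = 0`,
and pairing with `u` kills `c`, hence `a`.
-/

noncomputable section

open scoped RealInnerProductSpace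

open Fin.NatCast

namespace ArticulatedArm

/-- `ℝ^{m+1}` with the Euclidean structure. -/
abbrev Vec (m : ℕ) : Type := EuclideanSpace ℝ (Fin (m + 1))

/-- `(ℝ^{m+1})^{k+1}` with the Euclidean (product) structure. -/
abbrev Tup (m k : ℕ) : Type := PiLp 2 (fun _ : Fin (k + 1) => Vec m)

/-- The segment vector `x_{i+1} - x_i`. -/
def seg (m k : ℕ) (x : Tup m k) (i : ℕ) : Vec m :=
  x ((i + 1 : ℕ) : Fin (k + 1)) - x ((i : ℕ) : Fin (k + 1))

/-- The configuration space `C^k(m)`. -/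
def Conf (m k : ℕ) : Set (Tup m k) := {x | ∀ i, i < k → ‖seg m k x i‖ = 1}

/-- `A_{i,j}(x) = ⟨x_{i+1} - x_i, x_{j+1} - x_j⟩`. -/
def AA (m k : ℕ) (x : Tup m k) (i j : ℕ) : ℝ := ⟪seg m k x i, seg m k x j⟫

/-- `A_i(x) = A_{i,i-1}(x)`. -/
def Acoef (m k : ℕ) (x : Tup m k) (i : ℕ) : ℝ := AA m k x i (i - 1)

/-- `Z_i(x)`: the tuple whose `i`-th component is `x_{i+1} - x_i` and the others `0`. -/
def Zt (m k : ℕ) (x : Tup m k) (i : ℕ) : Tup m k :=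
  WithLp.toLp 2 (fun l => if (l : ℕ) = i then seg m k x i else 0)

/-- `N_i(x)`: the tuple with `i`-th component `-(x_{i+1} - x_i)`, `(i+1)`-th component
`x_{i+1} - x_i`, and the others `0`. -/
def Nt (m k : ℕ) (x : Tup m k) (i : ℕ) : Tup m k :=
  WithLp.toLp 2 (fun l => if (l : ℕ) = i then -(seg m k x i)
    else if (l : ℕ) = i + 1 then seg m k x i else 0)

/-- `Y_n(x) = Σ_{i=0}^{n-1} (Π_{j=i+1}^{n-1} A_j(x)) Z_i(x)`. -/
def Yt (m k : ℕ) (x : Tup m k) (n : ℕ) : Tup m k :=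
  ∑ i ∈ Finset.range n, (∏ j ∈ Finset.Ico (i + 1) n, Acoef m k x j) • Zt m k x i

/-- `Ψ_i(x) = ‖x_{i+1} - x_i‖² - 1`. -/
def Psi (m k : ℕ) (i : ℕ) (x : Tup m k) : ℝ := ‖seg m k x i‖ ^ 2 - 1

/-- `e_r^{(i)}`: the tuple whose `i`-th component is the `r`-th standard basis
vector of `ℝ^{m+1}` and whose other components are `0`. -/
def et (m k : ℕ) (i : ℕ) (r : Fin (m + 1)) : Tup m k :=
  WithLp.toLp 2 (fun l => if (l : ℕ) = i then EuclideanSpace.single r (1 : ℝ) else 0)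

section Tilt

variable {V W : Type*} [NormedAddCommGroup V] [InnerProductSpace ℝ V]
  [AddCommGroup W] [Module ℝ W] (ι : V →ₗ[ℝ] W) (Y : W) (u : V)

/-- On the standard basis `e_r` of `ℝ^{m+1}`, `tilt (toLast m k) Y_k u` takes the values `v_r`. -/
def tilt : V →ₗ[ℝ] W := (innerₛₗ ℝ u).smulRight Y + ι

theorem tilt_apply (a : V) : tilt ι Y u a = ⟪a, u⟫ • Y + ι a := by
  simp [tilt, real_inner_comm]

variable {u}

theorem mem_range_tilt_iff (hu : ⟪u, u⟫ = 1) (w : W) :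
    w ∈ LinearMap.range (tilt ι Y u) ↔ ∃ a, ⟪a, u⟫ = 0 ∧ ∃ c : ℝ, w = ι a + c • (Y + ι u) := by
  constructor
  · rintro ⟨a, rfl⟩
    refine ⟨a - ⟪a, u⟫ • u, ?_, ⟪a, u⟫, ?_⟩
    · rw [inner_sub_left, real_inner_smul_left, hu, mul_one, sub_self]
    · rw [tilt_apply, map_sub, map_smul]
      module
  · rintro ⟨a, ha, c, rfl⟩
    refine ⟨a + c • u, ?_⟩
    rw [tilt_apply, inner_add_left, real_inner_smul_left, ha, hu, map_add, map_smul, mul_one,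
      zero_add]
    module

theorem eq_zero_of_add_smul_eq_zero (hu : ⟪u, u⟫ = 1) {π : W →ₗ[ℝ] V}
    (hπι : ∀ a, π (ι a) = a) (hπY : π Y = 0) {a : V} (ha : ⟪a, u⟫ = 0) {c : ℝ}
    (h : ι a + c • (Y + ι u) = 0) : a = 0 ∧ c = 0 := by
  have hslot : a + c • u = 0 := by
    simpa [hπι, hπY] using congrArg π h
  have hc : c = 0 := by
    have := congrArg (⟪·, u⟫) hslot
    simpa only [inner_add_left, real_inner_smul_left, ha, hu, inner_zero_left, zero_add,
      mul_one] using this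
  subst hc
  simpa using hslot

end Tilt

section LastSlot

variable {m k : ℕ}

def toLast (m k : ℕ) : Vec m →ₗ[ℝ] Tup m k where
  toFun a := WithLp.toLp 2 (fun l => if (l : ℕ) = k then a else 0)
  map_add' a b := by ext l : 1; by_cases h : (l : ℕ) = k <;> simp [h]
  map_smul' c a := by ext l : 1; by_cases h : (l : ℕ) = k <;> simp [h]

theorem val_natCast_self (k : ℕ) : (((k : ℕ) : Fin (k + 1)) : ℕ) = k :=
  Fin.val_cast_of_lt k.lt_succ_self

theorem toLast_apply_last (a : Vec m) : toLast m k a ((k : ℕ) : Fin (k + 1)) = a := by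
  simp [toLast]

theorem Yt_apply_of_le (x : Tup m k) {n : ℕ} {l : Fin (k + 1)} (hnl : n ≤ l) :
    Yt m k x n l = 0 := by
  simp only [Yt, WithLp.ofLp_sum, WithLp.ofLp_smul, Finset.sum_apply, Pi.smul_apply]
  refine Finset.sum_eq_zero fun i hi => ?_
  have hli : (l : ℕ) ≠ i := by have := Finset.mem_range.mp hi; omega
  simp [Zt, hli]

theorem mem_support_last_iff (u : Vec m) (v : Tup m k) :
    ((∀ l : Fin (k + 1), (l : ℕ) ≠ k → v l = 0) ∧ ⟪v ((k : ℕ) : Fin (k + 1)), u⟫ = 0) ↔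
      ∃ a, ⟪a, u⟫ = 0 ∧ v = toLast m k a := by
  constructor
  · rintro ⟨hv, hvu⟩
    refine ⟨_, hvu, ?_⟩
    ext l : 2
    by_cases hl : (l : ℕ) = k
    · have : l = ((k : ℕ) : Fin (k + 1)) := Fin.ext (by rw [hl, val_natCast_self])
      subst this
      rw [toLast_apply_last]
    · simp [toLast, hl, hv l hl]
  · rintro ⟨a, ha, rfl⟩
    exact ⟨fun l hl => by simp [toLast, hl], by rwa [toLast_apply_last]⟩

theorem span_range_eq_range_tilt (x : Tup m k) (u : Vec m) :
    Submodule.span ℝ (Set.range fun r => u r • Yt m k x k + et m k k r) =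
      LinearMap.range (tilt (toLast m k) (Yt m k x k) u) := by
  have hv : (fun r => u r • Yt m k x k + et m k k r) =
      tilt (toLast m k) (Yt m k x k) u ∘ EuclideanSpace.basisFun (Fin (m + 1)) ℝ := by
    funext r
    simp [tilt_apply, EuclideanSpace.inner_single_left, toLast, et]
  rw [hv, Set.range_comp, ← Submodule.map_span, ← OrthonormalBasis.coe_toBasis,
    Module.Basis.span_eq, ← LinearMap.range_eq_map]

end LastSlot

theorem statement4_general (m k : ℕ) (hk : 1 ≤ k)
    (q : Tup m k) (hq : q ∈ Conf m k) :
    let vr : Fin (m + 1) → Tup m k :=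
      fun r => (seg m k q (k - 1) r) • Yt m k q k + et m k k r
    let Dk : Set (Tup m k) := (Submodule.span ℝ (Set.range vr) : Set (Tup m k))
    let Lk : Set (Tup m k) := {v | (∀ l : Fin (k + 1), (l : ℕ) ≠ k → v l = 0) ∧
      ⟪v ((k : ℕ) : Fin (k + 1)), seg m k q (k - 1)⟫ = 0}
    let Vk : Tup m k := WithLp.toLp 2 (fun l => if (l : ℕ) = k then seg m k q (k - 1) else 0)
    let Xk : Tup m k := Yt m k q k + Vk
    (∀ w : Tup m k, w ∈ Dk ↔ ∃ v ∈ Lk, ∃ c : ℝ, w = v + c • Xk) ∧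
    (∀ v ∈ Lk, ∀ c : ℝ, v + c • Xk = 0 → v = 0 ∧ c = 0) := by
  intro vr Dk Lk Vk Xk
  set u := seg m k q (k - 1)
  have hu : ⟪u, u⟫ = 1 := by
    rw [real_inner_self_eq_norm_sq, hq (k - 1) (by omega), one_pow]
  have hLk (v : Tup m k) : v ∈ Lk ↔ ∃ a, ⟪a, u⟫ = 0 ∧ v = toLast m k a :=
    mem_support_last_iff u v
  constructor
  · intro w
    change w ∈ Submodule.span ℝ (Set.range vr) ↔ _
    rw [span_range_eq_range_tilt, mem_range_tilt_iff _ _ hu]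
    constructor
    · rintro ⟨a, ha, c, rfl⟩
      exact ⟨_, (hLk _).mpr ⟨a, ha, rfl⟩, c, rfl⟩
    · rintro ⟨v, hv, c, rfl⟩
      obtain ⟨a, ha, rfl⟩ := (hLk v).mp hv
      exact ⟨a, ha, c, rfl⟩
  · intro v hv c hvc
    obtain ⟨a, ha, rfl⟩ := (hLk v).mp hv
    obtain ⟨rfl, rfl⟩ := eq_zero_of_add_smul_eq_zero (toLast m k) (Yt m k q k) hu
      (π := (PiLp.proj 2 (fun _ => Vec m) ((k : ℕ) : Fin (k + 1))).toLinearMap)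
      toLast_apply_last (Yt_apply_of_le q (val_natCast_self k).ge) ha hvc
    exact ⟨map_zero _, rfl⟩

/-- at every `q ∈ C^k(m)`, `D_k(q) = span{v_r(q)}` is the direct sum of the
vertical subspace `L_k(q)` and the line spanned by `X_k(q) = Y_k(q) + V_k(q)`. -/
theorem statement4 (m k : ℕ) (hm : 2 ≤ m) (hk : 1 ≤ k)
    (q : Tup m k) (hq : q ∈ Conf m k) :
    let vr : Fin (m + 1) → Tup m k :=
      fun r => (seg m k q (k - 1) r) • Yt m k q k + et m k k r
    let Dk : Set (Tup m k) := (Submodule.span ℝ (Set.range vr) : Set (Tup m k))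
    let Lk : Set (Tup m k) := {v | (∀ l : Fin (k + 1), (l : ℕ) ≠ k → v l = 0) ∧
      ⟪v ((k : ℕ) : Fin (k + 1)), seg m k q (k - 1)⟫ = 0}
    let Vk : Tup m k := WithLp.toLp 2 (fun l => if (l : ℕ) = k then seg m k q (k - 1) else 0)
    let Xk : Tup m k := Yt m k q k + Vk
    (∀ w : Tup m k, w ∈ Dk ↔ ∃ v ∈ Lk, ∃ c : ℝ, w = v + c • Xk) ∧
    (∀ v ∈ Lk, ∀ c : ℝ, v + c • Xk = 0 → v = 0 ∧ c = 0) :=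
  statement4_general m k hk q hq

end ArticulatedArm
end
end

section
/- Fix integers h ≥ 1 and l ≥ 0, and set k = h + l + 1. For 0 ≤ j ≤ l define φ̄_j : (ℝ^{m+1})^{k+1} → ℝ by φ̄_j(x) = ⟨x_{h+j+1} − x_{h+j}, x_{h+j} − x_{h−1}⟩ (so φ̄_0 = A_h). At every point q ∈ C^k(m) satisfying φ̄_j(q) = 0 for all 0 ≤ j ≤ l, the map (ℝ^{m+1})^{k+1} → ℝ^{k + l + 1} whose components are Ψ_0, …, Ψ_{k−1}, φ̄_0, …, φ̄_l has surjective Fréchet derivative at q. (This expresses that the class C_{R^h V T^l} is an analytic submanifold of C^k(m) of codimension l + 1.) -/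
/-! The derivative is computed on the variations that translate the points `x_{n+1}, …, x_k`
by a vector `w`; such a variation changes the `n`-th segment only. Moving segment `n` along
itself moves `Ψ_n` alone, so the `Ψ`-part of the derivative is onto. Moving segment `h + j` along
the chord `S_j = x_{h+j} - x_{h-1}` leaves every `Ψ_i` fixed to first order, since `φ̄_j(q) = 0`
says the segment is orthogonal to `S_j`; its `φ̄`-image vanishes below index `j` and equals
`‖S_j‖² = j + 1` at `j` (Pythagoras, again by `φ̄ = 0`). This triangular system with nonzero
diagonal shows that the `φ̄`-part maps the kernel of the `Ψ`-part onto `ℝ^{l+1}`. -/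

noncomputable section

open scoped RealInnerProductSpace

open Fin.NatCast

theorem Submodule.eq_top_of_isUpperTriangular {K ι : Type*} [Field K] [Fintype ι] [LinearOrder ι]
    {R : Submodule K (ι → K)} (M : Matrix ι ι K) (hM : ∀ i, M i ∈ R)
    (htri : M.IsUpperTriangular) (hdiag : ∀ i, M i i ≠ 0) : R = ⊤ := by
  classical
  have hunit : IsUnit M := by
    rw [Matrix.isUnit_iff_isUnit_det, Matrix.det_of_isUpperTriangular htri, isUnit_iff_ne_zero]
    exact Finset.prod_ne_zero_iff.2 fun i _ => hdiag i
  refine eq_top_iff'.2 fun y => ?_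
  obtain ⟨x, rfl⟩ := Matrix.vecMul_surjective_iff_isUnit.2 hunit y
  show Matrix.vecMul x M ∈ R
  rw [Matrix.vecMul_eq_sum]
  exact R.sum_mem fun i _ => R.smul_mem _ (hM i)

theorem LinearMap.surjective_prod_of_map_ker_eq_top {R V M N : Type*} [Ring R] [AddCommGroup V]
    [AddCommGroup M] [AddCommGroup N] [Module R V] [Module R M] [Module R N]
    {f : V →ₗ[R] M} {g : V →ₗ[R] N} (hf : Function.Surjective f)
    (hg : (ker f).map g = ⊤) : Function.Surjective (f.prod g) := by
  rintro ⟨a, b⟩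
  obtain ⟨v, rfl⟩ := hf a
  obtain ⟨w, hw, hgw⟩ : b - g v ∈ (ker f).map g := hg ▸ Submodule.mem_top
  exact ⟨v + w, by simp [mem_ker.1 hw, hgw]⟩

namespace ArticulatedArm

variable {m k : ℕ}

def displacement (m k a b : ℕ) : Tup m k →L[ℝ] Vec m :=
  PiLp.proj (𝕜 := ℝ) 2 (fun _ : Fin (k + 1) => Vec m) (b : Fin (k + 1)) -
    PiLp.proj (𝕜 := ℝ) 2 (fun _ : Fin (k + 1) => Vec m) (a : Fin (k + 1))

@[simp]
lemma displacement_apply (a b : ℕ) (x : Tup m k) :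
    displacement m k a b x = x (b : Fin (k + 1)) - x (a : Fin (k + 1)) := rfl

def shiftAfter (n : ℕ) (w : Vec m) : Tup m k :=
  WithLp.toLp 2 fun p => if n < (p : ℕ) then w else 0

lemma displacement_shiftAfter {a b n : ℕ} (hab : a ≤ b) (hb : b ≤ k) (w : Vec m) :
    displacement m k a b (shiftAfter n w) = if a ≤ n ∧ n < b then w else 0 := by
  simp only [displacement_apply, shiftAfter,
    Fin.val_cast_of_lt (Nat.lt_succ_of_le hb), Fin.val_cast_of_lt (by omega : a < k + 1)]
  split_ifs <;> first | (exfalso; omega) | simp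

lemma seg_shiftAfter {i n : ℕ} (hi : i < k) (w : Vec m) :
    seg m k (shiftAfter n w) i = if i = n then w else 0 := by
  rw [seg, ← displacement_apply, displacement_shiftAfter (Nat.le_succ i) hi]
  simp only [Nat.lt_succ_iff, ← le_antisymm_iff]

def phiBar (h j : ℕ) (x : Tup m k) : ℝ :=
  ⟪seg m k x (h + j), displacement m k (h - 1) (h + j) x⟫

def psiDeriv (q : Tup m k) : Tup m k →L[ℝ] (Fin k → ℝ) :=
  ContinuousLinearMap.pi fun i : Fin k =>
    2 • (innerSL ℝ (seg m k q i)).comp (displacement m k i (i + 1))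

def phiBarDeriv (h l : ℕ) (q : Tup m k) : Tup m k →L[ℝ] (Fin (l + 1) → ℝ) :=
  ContinuousLinearMap.pi fun j : Fin (l + 1) =>
    (fderivInnerCLM ℝ (seg m k q (h + j), displacement m k (h - 1) (h + j) q)).comp
      ((displacement m k (h + j) (h + j + 1)).prod (displacement m k (h - 1) (h + j)))

lemma hasFDerivAt_psi (q : Tup m k) :
    HasFDerivAt (fun x (i : Fin k) => Psi m k i x) (psiDeriv q) q :=
  hasFDerivAt_pi.2 fun i => ((displacement m k i (i + 1)).hasFDerivAt.norm_sq).sub_const 1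

lemma hasFDerivAt_phiBar (h l : ℕ) (q : Tup m k) :
    HasFDerivAt (fun x (j : Fin (l + 1)) => phiBar h j x) (phiBarDeriv h l q) q :=
  hasFDerivAt_pi.2 fun j =>
    (displacement m k (h + j) (h + j + 1)).hasFDerivAt.inner ℝ
      (displacement m k (h - 1) (h + j)).hasFDerivAt

lemma psiDeriv_apply (q v : Tup m k) (i : Fin k) :
    psiDeriv q v i = 2 * ⟪seg m k q i, seg m k v i⟫ := by
  simp only [psiDeriv, ContinuousLinearMap.pi_apply, smul_apply,
    ContinuousLinearMap.comp_apply, innerSL_apply_apply, nsmul_eq_mul, Nat.cast_ofNat]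
  rfl

lemma phiBarDeriv_apply (h l : ℕ) (q v : Tup m k) (j : Fin (l + 1)) :
    phiBarDeriv h l q v j = ⟪seg m k q (h + j), displacement m k (h - 1) (h + j) v⟫ +
      ⟪seg m k v (h + j), displacement m k (h - 1) (h + j) q⟫ := by
  simp only [phiBarDeriv, ContinuousLinearMap.pi_apply, ContinuousLinearMap.comp_apply,
    ContinuousLinearMap.prod_apply, fderivInnerCLM_apply]
  rfl

lemma psiDeriv_shiftAfter (q : Tup m k) (n : ℕ) (w : Vec m) (i : Fin k) :
    psiDeriv q (shiftAfter n w) i = if (i : ℕ) = n then 2 * ⟪seg m k q n, w⟫ else 0 := by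
  rw [psiDeriv_apply, seg_shiftAfter i.isLt]
  split_ifs with hi
  · rw [hi]
  · rw [inner_zero_right, mul_zero]

lemma phiBarDeriv_shiftAfter {h l : ℕ} (hk : h + l < k) (q : Tup m k) (n : ℕ) (w : Vec m)
    (j : Fin (l + 1)) :
    phiBarDeriv h l q (shiftAfter n w) j =
      (if h - 1 ≤ n ∧ n < h + j then ⟪seg m k q (h + j), w⟫ else 0) +
        if h + j = n then ⟪w, displacement m k (h - 1) (h + j) q⟫ else 0 := by
  have hj := j.isLt
  rw [phiBarDeriv_apply, displacement_shiftAfter (by omega) (by omega), seg_shiftAfter (by omega)]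
  split_ifs <;> simp

variable {h l : ℕ} {q : Tup m k}

lemma norm_sq_displacement (hh : 1 ≤ h) (hk : h + l < k) (hq : q ∈ Conf m k)
    (hφ : ∀ j ≤ l, phiBar h j q = 0) {j : ℕ} (hj : j ≤ l) :
    ‖displacement m k (h - 1) (h + j) q‖ ^ 2 = j + 1 := by
  induction j with
  | zero =>
    have hseg : displacement m k (h - 1) (h + 0) q = seg m k q (h - 1) := by
      rw [show h + 0 = h - 1 + 1 by omega]; rfl
    rw [hseg, hq (h - 1) (by omega)]
    norm_num
  | succ j ih =>
    have hsplit : displacement m k (h - 1) (h + (j + 1)) q =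
        seg m k q (h + j) + displacement m k (h - 1) (h + j) q := by
      simp only [displacement_apply, seg, ← add_assoc, sub_add_sub_cancel]
    have horth : ⟪seg m k q (h + j), displacement m k (h - 1) (h + j) q⟫ = 0 := hφ j (by omega)
    rw [hsplit, norm_add_sq_real, ih (by omega), horth, hq (h + j) (by omega)]
    push_cast
    ring

lemma psiDeriv_surjective (hq : q ∈ Conf m k) : Function.Surjective (psiDeriv q) := by
  refine LinearMap.range_eq_top.1 <| Submodule.eq_top_of_isUpperTriangular
    (Matrix.diagonal fun _ => 2) (fun n => ⟨shiftAfter n (seg m k q n), ?_⟩)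
    (Matrix.blockTriangular_diagonal _) (by simp)
  funext i
  rw [ContinuousLinearMap.coe_coe, psiDeriv_shiftAfter, real_inner_self_eq_norm_sq,
    hq n n.isLt]
  simp [Matrix.diagonal, Fin.val_inj, eq_comm]

lemma map_ker_psiDeriv_eq_top (hh : 1 ≤ h) (hk : h + l < k) (hq : q ∈ Conf m k)
    (hφ : ∀ j ≤ l, phiBar h j q = 0) :
    (LinearMap.ker (psiDeriv q : Tup m k →ₗ[ℝ] Fin k → ℝ)).map
      (phiBarDeriv h l q : Tup m k →ₗ[ℝ] Fin (l + 1) → ℝ) = ⊤ := by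
  refine Submodule.eq_top_of_isUpperTriangular
    (fun j => phiBarDeriv h l q (shiftAfter (h + j) (displacement m k (h - 1) (h + j) q)))
    (fun j => Submodule.mem_map_of_mem ?_) ?_ ?_
  · rw [LinearMap.mem_ker]
    funext i
    have horth : ⟪seg m k q (h + j), displacement m k (h - 1) (h + j) q⟫ = 0 :=
      hφ j (Nat.lt_succ_iff.1 j.isLt)
    rw [ContinuousLinearMap.coe_coe, psiDeriv_shiftAfter, horth]
    simp
  · intro j j' hlt
    have hlt' : (j' : ℕ) < j := hlt
    simp only [phiBarDeriv_shiftAfter hk]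
    rw [if_neg (by omega), if_neg (by omega), add_zero]
  · intro j
    rw [phiBarDeriv_shiftAfter hk, if_neg (by omega), if_pos rfl, zero_add,
      real_inner_self_eq_norm_sq, norm_sq_displacement hh hk hq hφ (Nat.lt_succ_iff.1 j.isLt)]
    positivity

theorem statement9_general (m h l : ℕ) (hh : 1 ≤ h) :
    let k := h + l + 1
    let phibar : ℕ → Tup m k → ℝ := fun j x =>
      ⟪x ((h + j + 1 : ℕ) : Fin (k + 1)) - x ((h + j : ℕ) : Fin (k + 1)),
        x ((h + j : ℕ) : Fin (k + 1)) - x ((h - 1 : ℕ) : Fin (k + 1))⟫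
    ∀ q ∈ Conf m k, (∀ j, j ≤ l → phibar j q = 0) →
      ∃ D : Tup m k →L[ℝ] ((Fin k → ℝ) × (Fin (l + 1) → ℝ)),
        HasFDerivAt (fun x : Tup m k =>
          ((fun i : Fin k => Psi m k (i : ℕ) x),
           (fun j : Fin (l + 1) => phibar (j : ℕ) x))) D q ∧
        Function.Surjective D := by
  intro k phibar q hq hphi
  refine ⟨(psiDeriv q).prod (phiBarDeriv h l q),
    (hasFDerivAt_psi q).prodMk (hasFDerivAt_phiBar h l q), ?_⟩
  exact LinearMap.surjective_prod_of_map_ker_eq_top (psiDeriv_surjective hq)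
    (map_ker_psiDeriv_eq_top hh (Nat.lt_succ_self _) hq hphi)

/-- with `k = h + l + 1` and `φ̄_j(x) = ⟨x_{h+j+1} - x_{h+j}, x_{h+j} - x_{h-1}⟩`,
at every `q ∈ C^k(m)` with `φ̄_j(q) = 0` for `0 ≤ j ≤ l`, the map with components
`Ψ_0,…,Ψ_{k-1}, φ̄_0,…,φ̄_l` has surjective Fréchet derivative at `q`. -/
theorem statement9 (m h l : ℕ) (hm : 2 ≤ m) (hh : 1 ≤ h) :
    let k := h + l + 1
    let phibar : ℕ → Tup m k → ℝ := fun j x =>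
      ⟪x ((h + j + 1 : ℕ) : Fin (k + 1)) - x ((h + j : ℕ) : Fin (k + 1)),
        x ((h + j : ℕ) : Fin (k + 1)) - x ((h - 1 : ℕ) : Fin (k + 1))⟫
    ∀ q ∈ Conf m k, (∀ j, j ≤ l → phibar j q = 0) →
      ∃ D : Tup m k →L[ℝ] ((Fin k → ℝ) × (Fin (l + 1) → ℝ)),
        HasFDerivAt (fun x : Tup m k =>
          ((fun i : Fin k => Psi m k (i : ℕ) x),
           (fun j : Fin (l + 1) => phibar (j : ℕ) x))) D q ∧
        Function.Surjective D :=
  statement9_general m h l hh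

end ArticulatedArm
end
end

section
/- Fix integers h ≥ 1 and j ≥ 0 with h + j + 2 ≤ k, and define φ̄_{j'}(x) = ⟨x_{h+j'+1} − x_{h+j'}, x_{h+j'} − x_{h−1}⟩ for 0 ≤ j' ≤ j+1. Let q ∈ C^k(m) satisfy A_h(q) = 0 and φ̄_{j'}(q) = 0 for all 0 ≤ j' < j. Then the Fréchet derivative of φ̄_j at q applied to the vector Y_{h+j+2}(q) satisfies Dφ̄_j(q)[Y_{h+j+2}(q)] = −A_{h+j+1}(q)·φ̄_j(q) + φ̄_{j+1}(q). -/
/-!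
The derivative of `φ̄_j`, an inner product of two linear functions of `x`, is given by the
product rule. Of the components of `Y_{h+j+2}(q)` that it sees, the one at `h+j+1` is
`x_{h+j+2} - x_{h+j+1}`, the one at `h+j` is `A_{h+j+1}(q) (x_{h+j+1} - x_{h+j})`, and the one
at `h-1` vanishes because its coefficient contains the factor `A_h(q) = 0`. What remains is
inner-product algebra using `‖x_{h+j+1} - x_{h+j}‖ = 1`.
-/

noncomputable section

open scoped RealInnerProductSpace

open Fin.NatCast

namespace ArticulatedArm

theorem exists_hasFDerivAt_inner_clm {E F : Type*} [NormedAddCommGroup E] [NormedSpace ℝ E]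
    [NormedAddCommGroup F] [InnerProductSpace ℝ F] (f g : E →L[ℝ] F) (q : E) :
    ∃ D : E →L[ℝ] ℝ, HasFDerivAt (fun x => ⟪f x, g x⟫) D q ∧
      ∀ v, D v = ⟪f q, g v⟫ + ⟪f v, g q⟫ :=
  ⟨_, f.hasFDerivAt.inner ℝ g.hasFDerivAt, fun _ => rfl⟩

section Yt

variable {m k : ℕ} (x : Tup m k) {l : ℕ}

theorem Yt_apply_natCast (hl : l ≤ k) (n : ℕ) :
    Yt m k x n (l : Fin (k + 1)) =
      if l < n then (∏ i ∈ Finset.Ico (l + 1) n, Acoef m k x i) • seg m k x l else 0 := by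
  simp only [Yt, WithLp.ofLp_sum, WithLp.ofLp_smul, Finset.sum_apply, Pi.smul_apply, Zt,
    Fin.val_cast_of_lt (Nat.lt_succ_of_le hl), smul_ite, smul_zero,
    Finset.sum_ite_eq, Finset.mem_range]

theorem Yt_succ_apply_self (hl : l ≤ k) : Yt m k x (l + 1) (l : Fin (k + 1)) = seg m k x l := by
  simp [Yt_apply_natCast x hl]

theorem Yt_add_two_apply_self (hl : l ≤ k) :
    Yt m k x (l + 2) (l : Fin (k + 1)) = Acoef m k x (l + 1) • seg m k x l := by
  simp [Yt_apply_natCast x hl, Nat.Ico_succ_singleton]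

theorem Yt_apply_eq_zero_of_Acoef_eq_zero {i n : ℕ} (hl : l ≤ k) (hli : l < i) (hin : i < n)
    (hA : Acoef m k x i = 0) : Yt m k x n (l : Fin (k + 1)) = 0 := by
  rw [Yt_apply_natCast x hl, if_pos (hli.trans hin),
    Finset.prod_eq_zero (Finset.mem_Ico.mpr ⟨hli, hin⟩) hA, zero_smul]

end Yt

theorem inner_seg_succ_sub_eq {m k : ℕ} (x : Tup m k) (i : ℕ) (a : Fin (k + 1)) :
    ⟪seg m k x (i + 1), x ((i + 1 : ℕ) : Fin (k + 1)) - x a⟫ =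
      Acoef m k x (i + 1) + ⟪seg m k x (i + 1), x (i : Fin (k + 1)) - x a⟫ := by
  rw [show x ((i + 1 : ℕ) : Fin (k + 1)) - x a = seg m k x i + (x (i : Fin (k + 1)) - x a) by
    rw [seg]; abel, inner_add_right, Acoef, AA, Nat.add_sub_cancel]

theorem statement15_general (m k h j : ℕ) (hh : 1 ≤ h) (hk : h + j + 2 ≤ k) :
    let phibar : ℕ → Tup m k → ℝ := fun j' x =>
      ⟪x ((h + j' + 1 : ℕ) : Fin (k + 1)) - x ((h + j' : ℕ) : Fin (k + 1)),
        x ((h + j' : ℕ) : Fin (k + 1)) - x ((h - 1 : ℕ) : Fin (k + 1))⟫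
    ∀ q ∈ Conf m k, Acoef m k q h = 0 → (∀ j', j' < j → phibar j' q = 0) →
      ∃ D : Tup m k →L[ℝ] ℝ, HasFDerivAt (phibar j) D q ∧
        D (Yt m k q (h + j + 2)) =
          -(Acoef m k q (h + j + 1)) * phibar j q + phibar (j + 1) q := by
  intro phibar q hq hA _
  let ev (i : ℕ) : Tup m k →L[ℝ] Vec m := PiLp.proj 2 (fun _ => Vec m) (i : Fin (k + 1))
  obtain ⟨D, hD, hDv⟩ :=
    exists_hasFDerivAt_inner_clm (ev (h + j + 1) - ev (h + j)) (ev (h + j) - ev (h - 1)) q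
  refine ⟨D, hD, ?_⟩
  have hY₁ := Yt_succ_apply_self q (l := h + j + 1) (by omega)
  have hY₀ := Yt_add_two_apply_self q (l := h + j) (by omega)
  have hY' : Yt m k q (h + j + 2) ((h - 1 : ℕ) : Fin (k + 1)) = 0 :=
    Yt_apply_eq_zero_of_Acoef_eq_zero q (by omega) (by omega : h - 1 < h) (by omega) hA
  have hunit : ⟪seg m k q (h + j), seg m k q (h + j)⟫ = 1 := by
    rw [real_inner_self_eq_norm_sq, hq _ (by omega), one_pow]
  have hφ : phibar (j + 1) q = Acoef m k q (h + j + 1) +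
      ⟪seg m k q (h + j + 1), q ((h + j : ℕ) : Fin (k + 1)) - q ((h - 1 : ℕ) : Fin (k + 1))⟫ :=
    inner_seg_succ_sub_eq q (h + j) _
  rw [hDv, hφ]
  simp only [sub_apply, PiLp.proj_apply, ev, hY₁, hY₀, hY', sub_zero]
  change ⟪seg m k q (h + j), _⟫ + _ = -_ * ⟪seg m k q (h + j), _⟫ + _
  rw [inner_smul_right, hunit, inner_sub_left, real_inner_smul_left]
  ring

/-- with `φ̄_{j'}(x) = ⟨x_{h+j'+1} - x_{h+j'}, x_{h+j'} - x_{h-1}⟩`, if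
`q ∈ C^k(m)` satisfies `A_h(q) = 0` and `φ̄_{j'}(q) = 0` for all `j' < j`, then
`Dφ̄_j(q)[Y_{h+j+2}(q)] = -A_{h+j+1}(q)·φ̄_j(q) + φ̄_{j+1}(q)`. -/
theorem statement15 (m k h j : ℕ) (hm : 2 ≤ m) (hh : 1 ≤ h) (hk : h + j + 2 ≤ k) :
    let phibar : ℕ → Tup m k → ℝ := fun j' x =>
      ⟪x ((h + j' + 1 : ℕ) : Fin (k + 1)) - x ((h + j' : ℕ) : Fin (k + 1)),
        x ((h + j' : ℕ) : Fin (k + 1)) - x ((h - 1 : ℕ) : Fin (k + 1))⟫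
    ∀ q ∈ Conf m k, Acoef m k q h = 0 → (∀ j', j' < j → phibar j' q = 0) →
      ∃ D : Tup m k →L[ℝ] ℝ, HasFDerivAt (phibar j) D q ∧
        D (Yt m k q (h + j + 2)) =
          -(Acoef m k q (h + j + 1)) * phibar j q + phibar (j + 1) q :=
  statement15_general m k h j hh hk

end ArticulatedArm
end
end
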